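/- Let R > 0, c > 0, m ∈ ℝ, and let D = {z ∈ ℂ : |z| < R}. Suppose w : closure(D) → ℝ is continuous, twice continuously differentiable on D, satisfies Δw = c²·w on D, and w(z) = m for all z with |z| = R. Then w(z) = m · I₀(c·|z|)/I₀(c·R) for all z ∈ closure(D). -/

import Mathlib

/-- Directional derivative of `f : ℂ → E` at `z` in the direction `v ∈ ℂ`. -/
noncomputable def dirDeriv {E : Type*} [NormedAddCommGroup E] [NormedSpace ℝ E]
    (v : ℂ) (f : ℂ → E) (z : ℂ) : E :=
  deriv (fun t : ℝ => f (z + t • v)) 0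

/-- The flat Laplacian `Δf = ∂²f/∂x² + ∂²f/∂y²` of a function on `ℂ ≅ ℝ²`
(applied componentwise when the target is `ℂ`). -/
noncomputable def flatLaplacian {E : Type*} [NormedAddCommGroup E] [NormedSpace ℝ E]
    (f : ℂ → E) (z : ℂ) : E :=
  dirDeriv 1 (dirDeriv 1 f) z + dirDeriv Complex.I (dirDeriv Complex.I f) z

/-- The modified Bessel function of the first kind,
`I₀(x) = ∑ₖ (x/2)^(2k) / (k!)²`. -/
noncomputable def besselI0 (x : ℝ) : ℝ :=
  ∑' k : ℕ, (x / 2) ^ (2 * k) / (Nat.factorial k : ℝ) ^ 2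

/-!
Put `v(z) = m I₀(c|z|) / I₀(cR)`. With `F(x) = ∑ xᵏ/(k!)²` we have `I₀(t) = F(t²/4)`, and `F`
solves `x F'' + F' = F`; since the Laplacian of a radial function `G(|z|²)` is
`4 (|z|² G'' + G')`, this gives `Δv = c² v`, and `v = m` on the circle. The difference of two
solutions of `Δu = c² u` cannot have a positive interior maximum, where `Δu ≤ 0 < c² u`; applied
to `w - v` and `v - w` this forces `w = v`.
-/

open Filter Topology
open scoped Nat

/-- `I_j(t) = (t / 2) ^ j * besselSeries j ((t / 2) ^ 2)`. -/
noncomputable def besselSeries (j : ℕ) (x : ℝ) : ℝ :=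
  ∑' k : ℕ, x ^ k / (k ! * (k + j)! : ℝ)

lemma summable_besselSeries (j : ℕ) (x : ℝ) :
    Summable fun k : ℕ => x ^ k / (k ! * (k + j)! : ℝ) := by
  refine (Real.summable_pow_div_factorial |x|).of_norm_bounded fun k => ?_
  rw [norm_div, norm_pow, Real.norm_eq_abs, Real.norm_of_nonneg (by positivity)]
  gcongr
  exact le_mul_of_one_le_right (by positivity) (by exact_mod_cast (k + j).factorial_pos)

lemma succ_mul_pow_div_factorial (j k : ℕ) (x : ℝ) :
    ((k + 1 : ℕ) : ℝ) * x ^ k / ((k + 1)! * (k + 1 + j)! : ℝ) =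
      x ^ k / (k ! * (k + (j + 1))! : ℝ) := by
  rw [Nat.factorial_succ, show k + 1 + j = k + (j + 1) by ring]
  push_cast
  field_simp

lemma hasDerivAt_besselSeries (j : ℕ) (x : ℝ) :
    HasDerivAt (besselSeries j) (besselSeries (j + 1) x) x := by
  have hsummable_deriv (y : ℝ) :
      Summable fun k : ℕ => (k : ℝ) * y ^ (k - 1) / (k ! * (k + j)! : ℝ) :=
    (summable_nat_add_iff 1).mp <| (summable_besselSeries (j + 1) y).congr fun k =>
      (succ_mul_pow_div_factorial j k y).symm
  set T := |x| + 1
  have hx : x ∈ Set.Ioo (-T) T := abs_lt.mp (lt_add_one _)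
  have key := hasDerivAt_tsum_of_isPreconnected (hsummable_deriv T) isOpen_Ioo isPreconnected_Ioo
    (g := fun k (y : ℝ) => y ^ k / (k ! * (k + j)! : ℝ))
    (g' := fun k (y : ℝ) => (k : ℝ) * y ^ (k - 1) / (k ! * (k + j)! : ℝ))
    (fun k y _ => (hasDerivAt_pow k y).div_const _)
    (fun k y hy => by
      simp only [norm_div, norm_mul, norm_pow, Real.norm_eq_abs, Nat.abs_cast]
      have hpow := pow_le_pow_left₀ (abs_nonneg y) (abs_lt.mpr hy).le (k - 1)
      gcongr)
    hx (summable_besselSeries j x) hx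
  have hvalue :
      besselSeries (j + 1) x = ∑' k : ℕ, (k : ℝ) * x ^ (k - 1) / (k ! * (k + j)! : ℝ) := by
    rw [(hsummable_deriv x).tsum_eq_zero_add]
    simp only [besselSeries, Nat.cast_zero, zero_mul, zero_div, zero_add]
    exact tsum_congr fun k => (succ_mul_pow_div_factorial j k x).symm
  rw [hvalue]
  exact key

/-- The Bessel differential equation in the variable `x = (t / 2) ^ 2`. -/
lemma besselSeries_recurrence (j : ℕ) (x : ℝ) :
    x * besselSeries (j + 2) x + (j + 1) * besselSeries (j + 1) x = besselSeries j x := by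
  have hterm (k : ℕ) : x * (x ^ k / (k ! * (k + (j + 2))! : ℝ)) +
      (j + 1) * (x ^ (k + 1) / ((k + 1)! * (k + 1 + (j + 1))! : ℝ)) =
      x ^ (k + 1) / ((k + 1)! * (k + 1 + j)! : ℝ) := by
    rw [show k + (j + 2) = k + j + 1 + 1 by ring, show k + 1 + (j + 1) = k + j + 1 + 1 by ring,
      show k + 1 + j = k + j + 1 by ring, Nat.factorial_succ (k + j + 1), Nat.factorial_succ k]
    push_cast
    field_simp
    ring
  have hA := (summable_besselSeries (j + 2) x).mul_left x
  have hB := ((summable_nat_add_iff 1).mpr (summable_besselSeries (j + 1) x)).mul_left (j + 1 : ℝ)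
  unfold besselSeries
  rw [(summable_besselSeries (j + 1) x).tsum_eq_zero_add,
    (summable_besselSeries j x).tsum_eq_zero_add, ← tsum_congr hterm, hA.tsum_add hB,
    tsum_mul_left, tsum_mul_left, zero_add, zero_add, Nat.factorial_succ j]
  push_cast
  field_simp
  ring

lemma contDiff_besselSeries (j n : ℕ) : ContDiff ℝ n (besselSeries j) := by
  induction n generalizing j with
  | zero => exact contDiff_zero.mpr <| continuous_iff_continuousAt.mpr fun x =>
      (hasDerivAt_besselSeries j x).continuousAt
  | succ n ih =>
    rw [Nat.cast_succ, contDiff_succ_iff_deriv]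
    refine ⟨fun x => (hasDerivAt_besselSeries j x).differentiableAt, by simp, ?_⟩
    rw [show deriv (besselSeries j) = besselSeries (j + 1) from
      funext fun x => (hasDerivAt_besselSeries j x).deriv]
    exact ih (j + 1)

lemma one_le_besselSeries_zero {x : ℝ} (hx : 0 ≤ x) : 1 ≤ besselSeries 0 x := by
  simpa [besselSeries] using (summable_besselSeries 0 x).le_tsum 0 fun k _ => by positivity

lemma besselI0_eq_besselSeries (x : ℝ) : besselI0 x = besselSeries 0 (x ^ 2 / 4) := by
  unfold besselI0 besselSeries
  congr! 2 with k
  rw [pow_mul, div_pow, add_zero, ← sq]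
  norm_num

lemma one_le_besselI0 (x : ℝ) : 1 ≤ besselI0 x :=
  besselI0_eq_besselSeries x ▸ one_le_besselSeries_zero (by positivity)

section Laplacian

variable {E : Type*} [NormedAddCommGroup E] [NormedSpace ℝ E]

lemma dirDeriv_add_smul (v : ℂ) (f : ℂ → E) (z : ℂ) (t : ℝ) :
    dirDeriv v f (z + t • v) = deriv (fun s : ℝ => f (z + s • v)) t := by
  have := deriv_comp_const_add (fun s : ℝ => f (z + s • v)) t 0
  simp only [add_zero, add_smul, ← add_assoc] at this
  exact this

lemma dirDeriv_dirDeriv (v : ℂ) (f : ℂ → E) (z : ℂ) :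
    dirDeriv v (dirDeriv v f) z = deriv (deriv fun t : ℝ => f (z + t • v)) 0 :=
  congrArg (deriv · 0) (funext fun t => dirDeriv_add_smul v f z t)

lemma contDiffAt_comp_add_smul {n : WithTop ℕ∞} {f : ℂ → E} {z : ℂ} (hf : ContDiffAt ℝ n f z)
    (v : ℂ) : ContDiffAt ℝ n (fun t : ℝ => f (z + t • v)) 0 := by
  have hline : ContDiffAt ℝ n (fun t : ℝ => z + t • v) 0 := by fun_prop
  exact (by simpa using hf : ContDiffAt ℝ n f ((fun t : ℝ => z + t • v) 0)).comp 0 hline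

lemma flatLaplacian_sub {f g : ℂ → E} {z : ℂ} (hf : ContDiffAt ℝ 2 f z)
    (hg : ContDiffAt ℝ 2 g z) :
    flatLaplacian (f - g) z = flatLaplacian f z - flatLaplacian g z := by
  have hline (v : ℂ) : dirDeriv v (dirDeriv v (f - g)) z =
      dirDeriv v (dirDeriv v f) z - dirDeriv v (dirDeriv v g) z := by
    have := iteratedDeriv_sub (contDiffAt_comp_add_smul hf v) (contDiffAt_comp_add_smul hg v)
    simp only [iteratedDeriv_succ, iteratedDeriv_zero] at this
    rw [dirDeriv_dirDeriv, dirDeriv_dirDeriv, dirDeriv_dirDeriv]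
    exact this
  rw [flatLaplacian, flatLaplacian, flatLaplacian, hline, hline]
  abel

end Laplacian

lemma hasDerivAt_normSq_add_smul (z v : ℂ) (t : ℝ) :
    HasDerivAt (fun t : ℝ => Complex.normSq (z + t • v))
      (2 * (z.re * v.re + z.im * v.im) + 2 * t * Complex.normSq v) t := by
  have hpoly : (fun t : ℝ => Complex.normSq (z + t • v)) = fun t =>
      Complex.normSq z + 2 * (z.re * v.re + z.im * v.im) * t + Complex.normSq v * t ^ 2 := by
    funext t
    simp only [Complex.normSq_apply, Complex.add_re, Complex.add_im, Complex.smul_re,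
      Complex.smul_im, smul_eq_mul]
    ring
  rw [hpoly]
  exact ((((hasDerivAt_id t).const_mul _).const_add _).add
    ((hasDerivAt_pow 2 t).const_mul _)).congr_deriv (by norm_num; ring)

lemma deriv_deriv_comp_normSq_add_smul {G G' G'' : ℝ → ℝ} (hG : ∀ s, HasDerivAt G (G' s) s)
    (hG' : ∀ s, HasDerivAt G' (G'' s) s) (z v : ℂ) :
    deriv (deriv fun t : ℝ => G (Complex.normSq (z + t • v))) 0 =
      G'' (Complex.normSq z) * (2 * (z.re * v.re + z.im * v.im)) ^ 2 +
        G' (Complex.normSq z) * (2 * Complex.normSq v) := by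
  have hp := hasDerivAt_normSq_add_smul z v
  have hp' : HasDerivAt (fun t : ℝ => 2 * (z.re * v.re + z.im * v.im) + 2 * t * Complex.normSq v)
      (2 * Complex.normSq v) 0 := by
    simpa using (((hasDerivAt_id (0 : ℝ)).const_mul 2).mul_const (Complex.normSq v)).const_add
      (2 * (z.re * v.re + z.im * v.im))
  have hderiv : deriv (fun t : ℝ => G (Complex.normSq (z + t • v))) = fun t =>
      G' (Complex.normSq (z + t • v)) *
        (2 * (z.re * v.re + z.im * v.im) + 2 * t * Complex.normSq v) :=
    funext fun t => ((hG _).comp t (hp t)).deriv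
  rw [hderiv]
  refine (((hG' _).comp 0 (hp 0)).mul hp').deriv.trans ?_
  simp only [zero_smul, add_zero, mul_zero, Function.comp_apply]
  ring

lemma flatLaplacian_comp_normSq {G G' G'' : ℝ → ℝ} (hG : ∀ s, HasDerivAt G (G' s) s)
    (hG' : ∀ s, HasDerivAt G' (G'' s) s) (z : ℂ) :
    flatLaplacian (fun z => G (Complex.normSq z)) z =
      4 * (Complex.normSq z * G'' (Complex.normSq z) + G' (Complex.normSq z)) := by
  rw [flatLaplacian, dirDeriv_dirDeriv, dirDeriv_dirDeriv,
    deriv_deriv_comp_normSq_add_smul hG hG', deriv_deriv_comp_normSq_add_smul hG hG']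
  simp only [Complex.normSq_apply, Complex.one_re, Complex.one_im, Complex.I_re, Complex.I_im]
  ring

lemma besselI0_mul_norm (c : ℝ) (z : ℂ) :
    besselI0 (c * ‖z‖) = besselSeries 0 (c ^ 2 / 4 * Complex.normSq z) := by
  rw [besselI0_eq_besselSeries, Complex.normSq_eq_norm_sq]
  ring_nf

lemma flatLaplacian_besselI0_norm (k c : ℝ) (z : ℂ) :
    flatLaplacian (fun z => k * besselI0 (c * ‖z‖)) z = c ^ 2 * (k * besselI0 (c * ‖z‖)) := by
  have hG (s : ℝ) : HasDerivAt (fun s => k * besselSeries 0 (c ^ 2 / 4 * s))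
      (k * (c ^ 2 / 4) * besselSeries 1 (c ^ 2 / 4 * s)) s :=
    (((hasDerivAt_besselSeries 0 _).comp s ((hasDerivAt_id' s).const_mul _)).const_mul
      k).congr_deriv (by simp only [Nat.reduceAdd]; ring)
  have hG' (s : ℝ) : HasDerivAt (fun s => k * (c ^ 2 / 4) * besselSeries 1 (c ^ 2 / 4 * s))
      (k * (c ^ 2 / 4) * (c ^ 2 / 4) * besselSeries 2 (c ^ 2 / 4 * s)) s :=
    (((hasDerivAt_besselSeries 1 _).comp s ((hasDerivAt_id' s).const_mul _)).const_mul
      _).congr_deriv (by simp only [Nat.reduceAdd]; ring)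
  simp only [besselI0_mul_norm]
  rw [flatLaplacian_comp_normSq hG hG']
  linear_combination (k * c ^ 2) * besselSeries_recurrence 0 (c ^ 2 / 4 * Complex.normSq z)

lemma contDiff_besselI0_norm (k c : ℝ) (n : ℕ) :
    ContDiff ℝ n fun z : ℂ => k * besselI0 (c * ‖z‖) := by
  simp only [besselI0_mul_norm, Complex.normSq_eq_norm_sq]
  exact contDiff_const.mul ((contDiff_besselSeries 0 n).comp
    (contDiff_const.mul (contDiff_norm_sq ℝ)))

/-- If `f''(a) > 0` at a local maximum, then `a` is also a local minimum, so `f` is locally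
constant and `f''(a) = 0`. -/
lemma IsLocalMax.deriv_deriv_nonpos {f : ℝ → ℝ} {a : ℝ} (h : IsLocalMax f a)
    (hc : ContinuousAt f a) : deriv (deriv f) a ≤ 0 := by
  by_contra! hpos
  have hmin := isLocalMin_of_deriv_deriv_pos hpos h.deriv_eq_zero hc
  have hconst : f =ᶠ[𝓝 a] fun _ => f a := (h.and hmin).mono fun x hx => le_antisymm hx.1 hx.2
  have : deriv (deriv f) a = 0 := by
    rw [hconst.deriv.deriv_eq]
    simp
  exact hpos.ne' this

lemma flatLaplacian_nonpos_of_isLocalMax {f : ℂ → ℝ} {z : ℂ} (h : IsLocalMax f z)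
    (hc : ContinuousAt f z) : flatLaplacian f z ≤ 0 := by
  have hline (v : ℂ) : deriv (deriv fun t : ℝ => f (z + t • v)) 0 ≤ 0 := by
    have hl : ContinuousAt (fun t : ℝ => z + t • v) 0 := by fun_prop
    have h' : IsLocalMax f (z + (0 : ℝ) • v) := by rwa [zero_smul, add_zero]
    have hc' : ContinuousAt f (z + (0 : ℝ) • v) := by rwa [zero_smul, add_zero]
    exact (h'.comp_continuous (g := fun t : ℝ => z + t • v) hl).deriv_deriv_nonpos
      (hc'.comp (f := fun t : ℝ => z + t • v) hl)
  rw [flatLaplacian, dirDeriv_dirDeriv, dirDeriv_dirDeriv]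
  exact add_nonpos (hline 1) (hline Complex.I)

theorem nonpos_of_flatLaplacian_eq_mul {u : ℂ → ℝ} {x : ℂ} {R κ : ℝ} (hκ : 0 < κ)
    (hu : ContinuousOn u (Metric.closedBall x R))
    (hΔ : ∀ z ∈ Metric.ball x R, flatLaplacian u z = κ * u z)
    (hbdry : ∀ z ∈ Metric.sphere x R, u z ≤ 0) :
    ∀ z ∈ Metric.closedBall x R, u z ≤ 0 := by
  intro z hz
  obtain ⟨z₀, hz₀, hmax⟩ := (isCompact_closedBall x R).exists_isMaxOn ⟨z, hz⟩ hu
  refine (hmax hz).trans (not_lt.mp fun hpos => ?_)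
  have hint : z₀ ∈ Metric.ball x R := by
    rcases (Metric.mem_closedBall.mp hz₀).lt_or_eq with h | h
    · exact h
    · exact absurd (hbdry z₀ h) (not_le.mpr hpos)
  have hnhds : Metric.closedBall x R ∈ 𝓝 z₀ :=
    mem_of_superset (Metric.isOpen_ball.mem_nhds hint) Metric.ball_subset_closedBall
  have hΔnonpos :=
    flatLaplacian_nonpos_of_isLocalMax (hmax.isLocalMax hnhds) (hu.continuousAt hnhds)
  rw [hΔ z₀ hint] at hΔnonpos
  exact (mul_pos hκ hpos).not_ge hΔnonpos

theorem le_of_flatLaplacian_eq_mul {f g : ℂ → ℝ} {x : ℂ} {R κ : ℝ} (hκ : 0 < κ)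
    (hf : ContinuousOn f (Metric.closedBall x R)) (hg : ContinuousOn g (Metric.closedBall x R))
    (hf₂ : ContDiffOn ℝ 2 f (Metric.ball x R)) (hg₂ : ContDiffOn ℝ 2 g (Metric.ball x R))
    (hfΔ : ∀ z ∈ Metric.ball x R, flatLaplacian f z = κ * f z)
    (hgΔ : ∀ z ∈ Metric.ball x R, flatLaplacian g z = κ * g z)
    (hfg : ∀ z ∈ Metric.sphere x R, f z ≤ g z) :
    ∀ z ∈ Metric.closedBall x R, f z ≤ g z := by
  have hΔ (z : ℂ) (hz : z ∈ Metric.ball x R) : flatLaplacian (f - g) z = κ * (f - g) z := by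
    have hn := Metric.isOpen_ball.mem_nhds hz
    rw [flatLaplacian_sub (hf₂.contDiffAt hn) (hg₂.contDiffAt hn), hfΔ z hz, hgΔ z hz,
      Pi.sub_apply, mul_sub]
  intro z hz
  exact sub_nonpos.mp <| nonpos_of_flatLaplacian_eq_mul hκ (hf.sub hg) hΔ
    (fun z hz => sub_nonpos.mpr (hfg z hz)) z hz

theorem eqOn_of_flatLaplacian_eq_mul {f g : ℂ → ℝ} {x : ℂ} {R κ : ℝ} (hκ : 0 < κ)
    (hf : ContinuousOn f (Metric.closedBall x R)) (hg : ContinuousOn g (Metric.closedBall x R))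
    (hf₂ : ContDiffOn ℝ 2 f (Metric.ball x R)) (hg₂ : ContDiffOn ℝ 2 g (Metric.ball x R))
    (hfΔ : ∀ z ∈ Metric.ball x R, flatLaplacian f z = κ * f z)
    (hgΔ : ∀ z ∈ Metric.ball x R, flatLaplacian g z = κ * g z)
    (hfg : Set.EqOn f g (Metric.sphere x R)) :
    Set.EqOn f g (Metric.closedBall x R) := fun z hz =>
  le_antisymm
    (le_of_flatLaplacian_eq_mul hκ hf hg hf₂ hg₂ hfΔ hgΔ (fun _ hz => (hfg hz).le) z hz)
    (le_of_flatLaplacian_eq_mul hκ hg hf hg₂ hf₂ hgΔ hfΔ (fun _ hz => (hfg hz).ge) z hz)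

theorem statement5_general (R c m : ℝ) (hc : 0 < c) (w : ℂ → ℝ)
    (hw_cont : ContinuousOn w (Metric.closedBall (0 : ℂ) R))
    (hw_C2 : ContDiffOn ℝ 2 w (Metric.ball (0 : ℂ) R))
    (hw_eq : ∀ z ∈ Metric.ball (0 : ℂ) R, flatLaplacian w z = c ^ 2 * w z)
    (hw_bdry : ∀ z : ℂ, ‖z‖ = R → w z = m) :
    ∀ z ∈ Metric.closedBall (0 : ℂ) R,
      w z = m * besselI0 (c * ‖z‖) / besselI0 (c * R) := by
  have hv := contDiff_besselI0_norm (m / besselI0 (c * R)) c 2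
  have hI : besselI0 (c * R) ≠ 0 := (zero_lt_one.trans_le (one_le_besselI0 _)).ne'
  intro z hz
  rw [mul_div_right_comm]
  refine eqOn_of_flatLaplacian_eq_mul (pow_pos hc 2) hw_cont hv.continuous.continuousOn hw_C2
    hv.contDiffOn hw_eq (fun z _ => flatLaplacian_besselI0_norm _ c z) (fun z hz => ?_) hz
  rw [mem_sphere_zero_iff_norm] at hz
  simp only [hw_bdry z hz, hz, div_mul_cancel₀ m hI]

/-- the solution of the Dirichlet problem `Δw = c² w` on the disk
`{|z| < R}` with constant boundary value `m` is `w(z) = m · I₀(c|z|)/I₀(cR)`. -/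
theorem statement5 (R c m : ℝ) (hR : 0 < R) (hc : 0 < c) (w : ℂ → ℝ)
    (hw_cont : ContinuousOn w (Metric.closedBall (0 : ℂ) R))
    (hw_C2 : ContDiffOn ℝ 2 w (Metric.ball (0 : ℂ) R))
    (hw_eq : ∀ z ∈ Metric.ball (0 : ℂ) R, flatLaplacian w z = c ^ 2 * w z)
    (hw_bdry : ∀ z : ℂ, ‖z‖ = R → w z = m) :
    ∀ z ∈ Metric.closedBall (0 : ℂ) R,
      w z = m * besselI0 (c * ‖z‖) / besselI0 (c * R) :=
  statement5_general R c m hc w hw_cont hw_C2 hw_eq hw_bdry
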